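/- arXiv:2105.02065 — 5 statements merged into one kernel-verified Lean document; each statement's English description precedes it below -/
import Mathlib

section
/- Let c > 0 be a real number, M ∈ ℂ^{N×N} invertible, A ∈ ℂ^{N×N}, B ∈ ℂ^{M×N}, and U ∈ ℂ of size M×M Hermitian positive definite, and assume A·M⁻¹·Bᴴ·U·B = 0. If ũ ∈ ℂ^N satisfies (A + Bᴴ·U·B + c·M)·ũ = f, then u := ũ + (1/c)·M⁻¹·Bᴴ·U·B·ũ satisfies (A + c·M)·u = f. -/
open scoped Matrix ComplexOrder

theorem stmt_10
    (N M : ℕ) (c : ℝ) (hc : 0 < c)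
    (Mm : Matrix (Fin N) (Fin N) ℂ) (hMm : IsUnit Mm.det)
    (A : Matrix (Fin N) (Fin N) ℂ) (B : Matrix (Fin M) (Fin N) ℂ)
    (U : Matrix (Fin M) (Fin M) ℂ) (hU : U.PosDef)
    (hzero : A * Mm⁻¹ * (Bᴴ * U * B) = 0)
    (f utilde : Fin N → ℂ)
    (h : (A + Bᴴ * U * B + (c : ℂ) • Mm).mulVec utilde = f) :
    (A + (c : ℂ) • Mm).mulVec
        (utilde + (1 / c : ℂ) • (Mm⁻¹ * (Bᴴ * U * B)).mulVec utilde) = f := by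
  set K := Bᴴ * U * B with hK
  have hM : Mm * Mm⁻¹ = 1 := Matrix.mul_nonsing_inv _ hMm
  have hcne : (c : ℂ) ≠ 0 := by exact_mod_cast hc.ne'
  have key : (A + (c : ℂ) • Mm) * (1 + (1 / c : ℂ) • (Mm⁻¹ * K))
      = A + K + (c : ℂ) • Mm := by
    have h1 : A * (Mm⁻¹ * K) = 0 := by rw [← Matrix.mul_assoc]; exact hzero
    have h2 : Mm * (Mm⁻¹ * K) = K := by rw [← Matrix.mul_assoc, hM, Matrix.one_mul]
    rw [add_mul, mul_add, mul_add, Matrix.mul_one, Matrix.mul_one,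
      Matrix.mul_smul, h1, smul_zero, Matrix.smul_mul, Matrix.mul_smul, h2,
      smul_smul]
    rw [mul_one_div, div_self hcne, one_smul]
    abel
  calc (A + (c : ℂ) • Mm).mulVec
        (utilde + (1 / c : ℂ) • (Mm⁻¹ * K).mulVec utilde)
      = ((A + (c : ℂ) • Mm) * (1 + (1 / c : ℂ) • (Mm⁻¹ * K))).mulVec utilde := by
        have hv : (1 + (1 / c : ℂ) • (Mm⁻¹ * K)) *ᵥ utilde
            = utilde + (1 / c : ℂ) • (Mm⁻¹ * K) *ᵥ utilde := by
          rw [Matrix.add_mulVec, Matrix.one_mulVec, Matrix.smul_mulVec]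
        conv_rhs => rw [← Matrix.mulVec_mulVec, hv]
    _ = (A + K + (c : ℂ) • Mm).mulVec utilde := by rw [key]
    _ = f := h
end

section
/- Let c > 0 be a real number, M ∈ ℂ^{N×N} invertible, A ∈ ℂ^{N×N}, B ∈ ℂ^{M×N}, and U ∈ ℂ^{M×M} Hermitian positive definite, and assume A·M⁻¹·Bᴴ·U·B = 0. Given vectors f, u_aux, u_mass ∈ ℂ^N, define the residuals e_aux := f − (A + Bᴴ·U·B + c·M)·u_aux and e_mass := Bᴴ·U·B·u_aux − M·u_mass, and set u := u_aux + (1/c)·u_mass and e_orig := f − (A + c·M)·u. Then e_orig = e_aux + ((1/c)·A·M⁻¹ + I)·e_mass, where I is the identity matrix. -/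
open scoped Matrix ComplexOrder

theorem stmt_11
    (N M : ℕ) (c : ℝ) (hc : 0 < c)
    (Mm : Matrix (Fin N) (Fin N) ℂ) (hMm : IsUnit Mm.det)
    (A : Matrix (Fin N) (Fin N) ℂ) (B : Matrix (Fin M) (Fin N) ℂ)
    (U : Matrix (Fin M) (Fin M) ℂ) (hU : U.PosDef)
    (hzero : A * Mm⁻¹ * (Bᴴ * U * B) = 0)
    (f u_aux u_mass e_aux e_mass u e_orig : Fin N → ℂ)
    (h_aux : e_aux = f - (A + Bᴴ * U * B + (c : ℂ) • Mm).mulVec u_aux)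
    (h_mass : e_mass = (Bᴴ * U * B).mulVec u_aux - Mm.mulVec u_mass)
    (hu : u = u_aux + (1 / c : ℂ) • u_mass)
    (h_orig : e_orig = f - (A + (c : ℂ) • Mm).mulVec u) :
    e_orig = e_aux + ((1 / c : ℂ) • (A * Mm⁻¹) + 1).mulVec e_mass := by
  have hc' : (c : ℂ) ≠ 0 := by exact_mod_cast hc.ne'
  have hMinv : Mm⁻¹ * Mm = 1 := Matrix.nonsing_inv_mul Mm hMm
  have hAM : A * Mm⁻¹ * Mm = A := by rw [Matrix.mul_assoc, hMinv, Matrix.mul_one]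
  subst h_aux h_mass hu h_orig
  simp only [Matrix.add_mulVec, Matrix.mulVec_sub, Matrix.mulVec_add, Matrix.one_mulVec,
    Matrix.smul_mulVec, Matrix.mulVec_smul, Matrix.mulVec_mulVec, hzero, hAM,
    Matrix.zero_mulVec, smul_zero, add_mul, Matrix.smul_mul, one_mul]
  rw [smul_add, smul_smul, one_div, inv_mul_cancel₀ hc', one_smul]
  module
end

section
/- Let A ∈ ℂ^{N×N} be Hermitian positive semidefinite, M ∈ ℂ^{N×N} Hermitian positive definite, B ∈ ℂ^{M×N}, U ∈ ℂ^{M×M} Hermitian positive definite, and let λ be a nonzero real number. If u ∈ ℂ^N satisfies (A + Bᴴ·U·B)·u = λ·M·u and uᴴ·A·u = λ·(uᴴ·M·u), then A·u = λ·M·u and B·u = 0. -/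
open scoped Matrix ComplexOrder

theorem stmt_15
    (N M : ℕ) (A : Matrix (Fin N) (Fin N) ℂ) (hA : A.PosSemidef)
    (Mm : Matrix (Fin N) (Fin N) ℂ) (hMm : Mm.PosDef)
    (B : Matrix (Fin M) (Fin N) ℂ) (U : Matrix (Fin M) (Fin M) ℂ) (hU : U.PosDef)
    (lam : ℝ) (hlam : lam ≠ 0) (u : Fin N → ℂ)
    (heig : (A + Bᴴ * U * B).mulVec u = (lam : ℂ) • Mm.mulVec u)
    (hray : star u ⬝ᵥ A.mulVec u = (lam : ℂ) * (star u ⬝ᵥ Mm.mulVec u)) :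
    A.mulVec u = (lam : ℂ) • Mm.mulVec u ∧ B.mulVec u = 0 := by
  set v := B.mulVec u with hv
  have hq : star u ⬝ᵥ (Bᴴ * U * B).mulVec u = star v ⬝ᵥ U.mulVec v := by
    rw [hv, ← Matrix.mulVec_mulVec, ← Matrix.mulVec_mulVec,
      Matrix.dotProduct_mulVec, ← Matrix.star_mulVec]
  have hsum : star u ⬝ᵥ (A + Bᴴ * U * B).mulVec u
      = star u ⬝ᵥ A.mulVec u + star v ⬝ᵥ U.mulVec v := by
    rw [Matrix.add_mulVec, dotProduct_add, hq]
  have hzero : star v ⬝ᵥ U.mulVec v = 0 := by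
    have : star u ⬝ᵥ (A + Bᴴ * U * B).mulVec u
        = (lam : ℂ) * (star u ⬝ᵥ Mm.mulVec u) := by
      rw [heig, dotProduct_smul, smul_eq_mul]
    rw [hsum, hray] at this
    linear_combination this
  have hv0 : v = 0 := by
    by_contra h
    have := hU.dotProduct_mulVec_pos h
    rw [hzero] at this
    exact lt_irrefl _ this
  refine ⟨?_, hv0⟩
  have : (Bᴴ * U * B).mulVec u = 0 := by
    rw [← Matrix.mulVec_mulVec, ← Matrix.mulVec_mulVec, ← hv, hv0,
      Matrix.mulVec_zero, Matrix.mulVec_zero]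
  rw [Matrix.add_mulVec, this, add_zero] at heig
  exact heig
end

section
/- Let A ∈ ℂ^{N×N} be Hermitian, M ∈ ℂ^{N×N} Hermitian positive definite, B ∈ ℂ^{M×N}, U ∈ ℂ^{M×M} Hermitian positive definite, write G := Bᴴ·U·B, and assume A·M⁻¹·G = 0. Let λ be a nonzero real number and u ∈ ℂ^N satisfy (A + G)·u = λ·M·u. Define u₁ := (1/λ)·M⁻¹·A·u and u₂ := (1/λ)·M⁻¹·G·u. Then u = u₁ + u₂, A·u₁ = λ·M·u₁, and G·u₂ = λ·M·u₂. -/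
open scoped Matrix ComplexOrder

theorem stmt_17
    (N M : ℕ) (A : Matrix (Fin N) (Fin N) ℂ) (hA : A.IsHermitian)
    (Mm : Matrix (Fin N) (Fin N) ℂ) (hMm : Mm.PosDef)
    (B : Matrix (Fin M) (Fin N) ℂ) (U : Matrix (Fin M) (Fin M) ℂ) (hU : U.PosDef)
    (G : Matrix (Fin N) (Fin N) ℂ) (hG : G = Bᴴ * U * B)
    (hzero : A * Mm⁻¹ * G = 0)
    (lam : ℝ) (hlam : lam ≠ 0) (u u₁ u₂ : Fin N → ℂ)
    (heig : (A + G).mulVec u = (lam : ℂ) • Mm.mulVec u)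
    (hu₁ : u₁ = (1 / lam : ℂ) • (Mm⁻¹ * A).mulVec u)
    (hu₂ : u₂ = (1 / lam : ℂ) • (Mm⁻¹ * G).mulVec u) :
    u = u₁ + u₂ ∧ A.mulVec u₁ = (lam : ℂ) • Mm.mulVec u₁ ∧
      G.mulVec u₂ = (lam : ℂ) • Mm.mulVec u₂ := by
  have hlc : (lam : ℂ) ≠ 0 := by exact_mod_cast hlam
  have hGh : G.IsHermitian := by
    rw [hG, Matrix.IsHermitian]
    simp [Matrix.conjTranspose_mul, hU.isHermitian.eq, Matrix.mul_assoc]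
  have hdet : IsUnit Mm.det := (Matrix.isUnit_iff_isUnit_det _).1 hMm.isUnit
  have hinvMul : Mm⁻¹ * Mm = 1 := Matrix.nonsing_inv_mul _ hdet
  have hmulInv : Mm * Mm⁻¹ = 1 := Matrix.mul_nonsing_inv _ hdet
  have hzero' : G * Mm⁻¹ * A = 0 := by
    have := congrArg Matrix.conjTranspose hzero
    simpa [Matrix.conjTranspose_mul, hA.eq, hGh.eq, hMm.isHermitian.inv.eq,
      Matrix.mul_assoc] using this
  have hAG : A.mulVec u + G.mulVec u = (lam : ℂ) • Mm.mulVec u := by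
    rw [← Matrix.add_mulVec]; exact heig
  have h1 : u = u₁ + u₂ := by
    rw [hu₁, hu₂, ← smul_add, ← Matrix.mulVec_mulVec, ← Matrix.mulVec_mulVec,
      ← Matrix.mulVec_add, hAG, Matrix.mulVec_smul, Matrix.mulVec_mulVec, hinvMul,
      Matrix.one_mulVec, smul_smul, one_div, inv_mul_cancel₀ hlc, one_smul]
  have hAu : (A * Mm⁻¹ * A).mulVec u = (lam : ℂ) • A.mulVec u := by
    have h2 : (A * Mm⁻¹).mulVec (A.mulVec u + G.mulVec u)
        = (A * Mm⁻¹ * A).mulVec u := by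
      simp [Matrix.mulVec_add, Matrix.mulVec_mulVec, hzero]
    rw [← h2, hAG, Matrix.mulVec_smul, Matrix.mulVec_mulVec, Matrix.mul_assoc, hinvMul,
      Matrix.mul_one]
  have hGu : (G * Mm⁻¹ * G).mulVec u = (lam : ℂ) • G.mulVec u := by
    have h2 : (G * Mm⁻¹).mulVec (A.mulVec u + G.mulVec u)
        = (G * Mm⁻¹ * G).mulVec u := by
      simp [Matrix.mulVec_add, Matrix.mulVec_mulVec, hzero']
    rw [← h2, hAG, Matrix.mulVec_smul, Matrix.mulVec_mulVec, Matrix.mul_assoc, hinvMul,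
      Matrix.mul_one]
  refine ⟨h1, ?_, ?_⟩
  · rw [hu₁, Matrix.mulVec_smul, Matrix.mulVec_smul, Matrix.mulVec_mulVec,
      Matrix.mulVec_mulVec, ← Matrix.mul_assoc, ← Matrix.mul_assoc Mm, hmulInv,
      Matrix.one_mul, hAu, smul_comm ((lam : ℂ)) ((1/lam : ℂ))]
  · rw [hu₂, Matrix.mulVec_smul, Matrix.mulVec_smul, Matrix.mulVec_mulVec,
      Matrix.mulVec_mulVec, ← Matrix.mul_assoc, ← Matrix.mul_assoc Mm, hmulInv,
      Matrix.one_mul, hGu, smul_comm ((lam : ℂ)) ((1/lam : ℂ))]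
end

section
/- Let A ∈ ℂ^{N×N} be Hermitian positive semidefinite, M ∈ ℂ^{N×N} Hermitian positive definite, B ∈ ℂ^{M×N}, U ∈ ℂ^{M×M} Hermitian positive definite, write G := Bᴴ·U·B, and assume A·M⁻¹·G = 0. Let λ be a nonzero real number and u ∈ ℂ^N satisfy (A + G)·u = λ·M·u, with A·u ≠ 0 and G·u ≠ 0. Then the real numbers uᴴ·A·u, uᴴ·G·u and uᴴ·M·u satisfy 0 < (uᴴ·A·u)/(uᴴ·M·u) < λ and 0 < (uᴴ·G·u)/(uᴴ·M·u) < λ. -/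
open scoped Matrix ComplexOrder

lemma pos_of_psd_mulVec_ne {n : ℕ} {A : Matrix (Fin n) (Fin n) ℂ} (hA : A.PosSemidef)
    {u : Fin n → ℂ} (h : A.mulVec u ≠ 0) : 0 < (star u ⬝ᵥ A.mulVec u).re := by
  have hne : star u ⬝ᵥ A.mulVec u ≠ 0 := fun h0 =>
    h ((hA.dotProduct_mulVec_zero_iff u).mp h0)
  have hpos : 0 < star u ⬝ᵥ A.mulVec u := lt_of_le_of_ne (hA.dotProduct_mulVec_nonneg u) (Ne.symm hne)
  rw [Complex.lt_def] at hpos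
  simpa using hpos.1

theorem stmt_19
    (N M : ℕ) (A : Matrix (Fin N) (Fin N) ℂ) (hA : A.PosSemidef)
    (Mm : Matrix (Fin N) (Fin N) ℂ) (hMm : Mm.PosDef)
    (B : Matrix (Fin M) (Fin N) ℂ) (U : Matrix (Fin M) (Fin M) ℂ) (hU : U.PosDef)
    (G : Matrix (Fin N) (Fin N) ℂ) (hG : G = Bᴴ * U * B)
    (hzero : A * Mm⁻¹ * G = 0)
    (lam : ℝ) (hlam : lam ≠ 0) (u : Fin N → ℂ)
    (heig : (A + G).mulVec u = (lam : ℂ) • Mm.mulVec u)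
    (hAu : A.mulVec u ≠ 0) (hGu : G.mulVec u ≠ 0) :
    0 < (star u ⬝ᵥ A.mulVec u).re / (star u ⬝ᵥ Mm.mulVec u).re ∧
      (star u ⬝ᵥ A.mulVec u).re / (star u ⬝ᵥ Mm.mulVec u).re < lam ∧
      0 < (star u ⬝ᵥ G.mulVec u).re / (star u ⬝ᵥ Mm.mulVec u).re ∧
      (star u ⬝ᵥ G.mulVec u).re / (star u ⬝ᵥ Mm.mulVec u).re < lam := by
  have hGpsd : G.PosSemidef := hG ▸ hU.posSemidef.conjTranspose_mul_mul_same B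
  have ha : 0 < (star u ⬝ᵥ A.mulVec u).re := pos_of_psd_mulVec_ne hA hAu
  have hg : 0 < (star u ⬝ᵥ G.mulVec u).re := pos_of_psd_mulVec_ne hGpsd hGu
  have hu0 : u ≠ 0 := by
    rintro rfl; exact hAu (by simp)
  have hm : 0 < (star u ⬝ᵥ Mm.mulVec u).re := hMm.re_dotProduct_pos hu0
  set a := (star u ⬝ᵥ A.mulVec u).re
  set g := (star u ⬝ᵥ G.mulVec u).re
  set m := (star u ⬝ᵥ Mm.mulVec u).re
  have key : a + g = lam * m := by
    have h1 : star u ⬝ᵥ (A + G).mulVec u = star u ⬝ᵥ ((lam : ℂ) • Mm.mulVec u) := by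
      rw [heig]
    rw [Matrix.add_mulVec, dotProduct_add, dotProduct_smul] at h1
    have := congrArg Complex.re h1
    simpa [a, g, m, Complex.add_re, Complex.mul_re] using this
  have hlam' : 0 < lam := by
    have : 0 < lam * m := key ▸ add_pos ha hg
    nlinarith
  refine ⟨div_pos ha hm, ?_, div_pos hg hm, ?_⟩
  · rw [div_lt_iff₀ hm]; nlinarith
  · rw [div_lt_iff₀ hm]; nlinarith
end
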